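/- Let r ≥ 2 be an integer, G a graph on n vertices, and H any K_{1,r}-saturated subgraph of G. Then H has at least (r−1)·(n − α_{r−2}(G))/2 edges. -/

import Mathlib

/-!
Let `S` be the set of vertices of `H`-degree at most `r - 2`. If `u, v ∈ S` were adjacent in `G`
but not in `H`, then in `H + uv` the degrees of `u` and `v` would be at most `r - 1` and all other
degrees would still be below `r` (as `H` is `K_{1,r}`-free), so `H + uv` would contain no
`K_{1,r}`. Hence every `G`-neighbour of `v ∈ S` inside `S` is an `H`-neighbour, `S` is
`(r - 2)`-independent in `G`, and `|S| ≤ α_{r-2}(G)`. The remaining `n - |S|` vertices have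
`H`-degree at least `r - 1`, and the handshake lemma gives `2 e(H) ≥ (r - 1)(n - |S|)`.
-/

/-- The star graph `K_{1,r}`: one center (vertex `0`) joined to `r` leaves. -/
def starGraph (r : ℕ) : SimpleGraph (Fin (r + 1)) where
  Adj u v := u ≠ v ∧ (u = 0 ∨ v = 0)
  symm := ⟨fun u v h => ⟨h.1.symm, h.2.symm⟩⟩
  loopless := ⟨fun u h => h.1 rfl⟩

/-- `F` is contained in `G` as a subgraph, i.e. `G` has a copy of `F`. -/
def ContainsCopy {α β : Type*} (F : SimpleGraph α) (G : SimpleGraph β) : Prop :=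
  ∃ f : F →g G, Function.Injective f

/-- `H` is an `F`-saturated subgraph of `G`: it is a spanning subgraph of `G` (same vertex
set, `H ≤ G`), it is `F`-free, and adding any edge of `G` missing from `H` creates a copy
of `F`. -/
def IsSatSubgraph {V α : Type*} (G : SimpleGraph V) (F : SimpleGraph α)
    (H : SimpleGraph V) : Prop :=
  H ≤ G ∧ ¬ ContainsCopy F H ∧
    ∀ u v : V, G.Adj u v → ¬ H.Adj u v →
      ContainsCopy F (H ⊔ SimpleGraph.fromEdgeSet {s(u, v)})

/-- `sat(G, F)`: the minimum number of edges of an `F`-saturated subgraph of `G`. -/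
noncomputable def satNum {V α : Type*} (G : SimpleGraph V) (F : SimpleGraph α) : ℕ :=
  sInf {m | ∃ H : SimpleGraph V, IsSatSubgraph G F H ∧ H.edgeSet.ncard = m}

/-- `S` is `k`-independent in `G`: the induced subgraph `G[S]` has maximum degree at
most `k`, i.e. every vertex of `S` has at most `k` neighbours inside `S`. -/
def IsKIndepSet {V : Type*} (G : SimpleGraph V) (k : ℕ) (S : Set V) : Prop :=
  ∀ v ∈ S, (S ∩ G.neighborSet v).ncard ≤ k

/-- `α_k(G)`: the maximum cardinality of a `k`-independent set in `G`. -/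
noncomputable def kIndepNum {V : Type*} (G : SimpleGraph V) (k : ℕ) : ℕ :=
  sSup {m | ∃ S : Set V, IsKIndepSet G k S ∧ S.ncard = m}

/-- `α(G)`: the independence number of `G`. -/
noncomputable def indepNum {V : Type*} (G : SimpleGraph V) : ℕ :=
  sSup {m | ∃ S : Set V, (∀ u ∈ S, ∀ v ∈ S, ¬ G.Adj u v) ∧ S.ncard = m}

/-- The probability, under the Erdős–Rényi random graph `𝔾(n, p)`, that the sampled graph
lies in the set `A`; each labelled graph `G` on the vertex set `{1, …, n}` is sampled
with probability `p ^ e(G) * (1 - p) ^ (C(n,2) - e(G))`. -/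
noncomputable def gnpProb (n : ℕ) (p : ℝ) (A : Set (SimpleGraph (Fin n))) : ℝ :=
  ∑ G : SimpleGraph (Fin n),
    A.indicator (fun G => p ^ G.edgeSet.ncard * (1 - p) ^ (n.choose 2 - G.edgeSet.ncard)) G

open Finset
open scoped SimpleGraph

namespace SimpleGraph

variable {V : Type*} [Fintype V]

lemma card_mul_le_two_mul_card_edgeFinset (G : SimpleGraph V) [DecidableRel G.Adj] {d : ℕ}
    (s : Finset V) (hs : ∀ v ∈ s, d ≤ G.degree v) : #s * d ≤ 2 * #G.edgeFinset :=
  calc #s * d ≤ ∑ v ∈ s, G.degree v := by simpa using card_nsmul_le_sum s _ d hs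
    _ ≤ ∑ v, G.degree v := sum_le_sum_of_subset (subset_univ s)
    _ = 2 * #G.edgeFinset := G.sum_degrees_eq_twice_card_edges

variable [DecidableEq V]

lemma degree_sup_le (G₁ G₂ : SimpleGraph V) [DecidableRel G₁.Adj] [DecidableRel G₂.Adj]
    (v : V) : (G₁ ⊔ G₂).degree v ≤ G₁.degree v + G₂.degree v := by
  simpa only [← card_neighborFinset_eq_degree, neighborFinset_sup] using card_union_le _ _

lemma degree_edge_le_one (u v w : V) : (edge u v).degree w ≤ 1 := by
  rw [← card_neighborFinset_eq_degree, card_le_one]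
  simp only [mem_neighborFinset, edge_adj]
  grind

lemma degree_edge_eq_zero {u v w : V} (hu : w ≠ u) (hv : w ≠ v) : (edge u v).degree w = 0 := by
  rw [← card_neighborFinset_eq_degree, card_eq_zero, eq_empty_iff_forall_notMem]
  simp only [mem_neighborFinset, edge_adj]
  grind

end SimpleGraph

lemma containsCopy_iff_isContained {α β : Type*} {F : SimpleGraph α} {G : SimpleGraph β} :
    ContainsCopy F G ↔ F ⊑ G :=
  ⟨fun ⟨f, hf⟩ => ⟨⟨f, hf⟩⟩, fun ⟨f⟩ => ⟨f.toHom, f.injective⟩⟩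

lemma starGraph_eq_starGraph_zero (r : ℕ) : starGraph r = SimpleGraph.starGraph 0 := by
  ext u v
  simp [starGraph]

lemma starGraph_isContained_iff {V : Type*} {G : SimpleGraph V} [G.LocallyFinite] {r : ℕ} :
    starGraph r ⊑ G ↔ ∃ v, r ≤ G.degree v := by
  constructor
  · rintro ⟨f⟩
    rw [starGraph_eq_starGraph_zero] at f
    refine ⟨f 0, ?_⟩
    convert f.degree_le 0 using 1
    convert SimpleGraph.degree_starGraph_center.symm
    simp
  · rintro ⟨v, hv⟩
    obtain ⟨e⟩ : Nonempty (Fin r ↪ G.neighborSet v) :=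
      Function.Embedding.nonempty_of_card_le <| by
        rwa [Fintype.card_fin, SimpleGraph.card_neighborSet_eq_degree]
    let f : Fin (r + 1) → V := Fin.cases v fun i => e i
    have hleaf (i : Fin r) : G.Adj v (f i.succ) := (e i).2
    have hf : Function.Injective f := by
      intro a b hab
      cases a using Fin.cases <;> cases b using Fin.cases
      · rfl
      · exact absurd hab (hleaf _).ne
      · exact absurd hab (hleaf _).ne'
      · simpa using e.injective (Subtype.ext hab)
    refine ⟨⟨⟨f, ?_⟩, hf⟩⟩
    rintro a b ⟨hab, rfl | rfl⟩
    · cases b using Fin.cases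
      · exact absurd rfl hab
      · exact hleaf _
    · cases a using Fin.cases
      · exact absurd rfl hab
      · exact (hleaf _).symm

lemma IsKIndepSet.ncard_le_kIndepNum {V : Type*} [Finite V] {G : SimpleGraph V} {k : ℕ}
    {S : Set V} (hS : IsKIndepSet G k S) : S.ncard ≤ kIndepNum G k :=
  le_csSup ⟨Nat.card V, by rintro _ ⟨T, -, rfl⟩; exact T.ncard_le_card⟩ ⟨S, hS, rfl⟩

section Saturated

variable {V : Type*} [Fintype V] [DecidableEq V] {G H : SimpleGraph V} [DecidableRel H.Adj]
  {r : ℕ}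

lemma IsSatSubgraph.adj_of_degree_lt (hH : IsSatSubgraph G (starGraph r) H) {u v : V}
    (huv : G.Adj u v) (hu : H.degree u + 1 < r) (hv : H.degree v + 1 < r) : H.Adj u v := by
  by_contra hnadj
  have hfree : ∀ w, H.degree w < r := by
    simpa [containsCopy_iff_isContained, starGraph_isContained_iff] using hH.2.1
  obtain ⟨w, hw⟩ := starGraph_isContained_iff.1
    (containsCopy_iff_isContained.1 (hH.2.2 u v huv hnadj) : starGraph r ⊑ H ⊔ .edge u v)
  have hsup := H.degree_sup_le (.edge u v) w
  by_cases hw' : w = u ∨ w = v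
  · have := SimpleGraph.degree_edge_le_one u v w
    rcases hw' with rfl | rfl <;> omega
  · rw [not_or] at hw'
    have := SimpleGraph.degree_edge_eq_zero hw'.1 hw'.2
    have := hfree w
    omega

lemma IsSatSubgraph.isKIndepSet_setOf_degree_add_one_lt (hH : IsSatSubgraph G (starGraph r) H) :
    IsKIndepSet G (r - 2) {v | H.degree v + 1 < r} := by
  intro v (hv : H.degree v + 1 < r)
  have hsub : {v | H.degree v + 1 < r} ∩ G.neighborSet v ⊆ H.neighborSet v :=
    fun u ⟨hu, huv⟩ => hH.adj_of_degree_lt huv hv hu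
  calc _ ≤ (H.neighborSet v).ncard := Set.ncard_le_ncard hsub
    _ = H.degree v := by
      rw [Set.ncard_eq_toFinset_card', Set.toFinset_card, H.card_neighborSet_eq_degree]
    _ ≤ r - 2 := by omega

end Saturated

/-- Let `r ≥ 2` be an integer, `G` a graph on `n` vertices, and `H` any
`K_{1,r}`-saturated subgraph of `G`. Then `H` has at least `(r-1)(n - α_{r-2}(G))/2`
edges. -/
theorem sat_subgraph_edge_lower_bound (n r : ℕ) (hr : 2 ≤ r) (G H : SimpleGraph (Fin n))
    (hH : IsSatSubgraph G (starGraph r) H) :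
    ((r : ℝ) - 1) * ((n : ℝ) - (kIndepNum G (r - 2) : ℝ)) / 2
      ≤ (H.edgeSet.ncard : ℝ) := by
  classical
  set S : Finset (Fin n) := {v | H.degree v + 1 < r}
  have hS : #S ≤ kIndepNum G (r - 2) := by
    simpa [S, ← Set.ncard_coe_finset] using
      hH.isKIndepSet_setOf_degree_add_one_lt.ncard_le_kIndepNum
  have hSc : #Sᶜ * (r - 1) ≤ 2 * #H.edgeFinset :=
    H.card_mul_le_two_mul_card_edgeFinset Sᶜ fun v hv => by simp [S] at hv; omega
  have hE : H.edgeSet.ncard = #H.edgeFinset := by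
    rw [← Set.ncard_coe_finset, SimpleGraph.coe_edgeFinset]
  rw [card_compl, Fintype.card_fin] at hSc
  have hSn : #S ≤ n := by simpa using card_le_univ S
  rw [hE, div_le_iff₀ two_pos]
  have hr' : (2 : ℝ) ≤ r := by exact_mod_cast hr
  have hSc' : ((n : ℝ) - #S) * (r - 1) ≤ 2 * #H.edgeFinset := by
    have := (Nat.cast_le (α := ℝ)).2 hSc
    push_cast [Nat.cast_sub hSn, Nat.cast_sub (by omega : 1 ≤ r)] at this
    exact this
  have hS' : (#S : ℝ) ≤ kIndepNum G (r - 2) := by exact_mod_cast hS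
  nlinarith
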